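/- Let n, k be integers with n ≥ 1, k ≥ 0, and let c₁' > 0 satisfy 1 ≤ C₀ c₁', R² c ≤ C₀ (c₁')², and c₁' ≥ 2K c^{1/2} 2^{−k} R. Let A, B, C be integers with B ≠ 0, and let Δ be a closed interval centered at a point x₁ with length |Δ| = 2K c^{1/2} / H, where H := ( max{|A|^{1/i}, |B|^{1/j}}·|B| )^{1/2}; suppose |F_L(x₁)| ≤ c / max{|A|^{1/i}, |B|^{1/j}}, that 2^k R^{n−1} ≤ H < 2^{k+1} R^{n−1}, and that V := min_{x∈Δ} |F'_L(x)| (attained at x₀ ∈ Δ) satisfies V ≤ R^{−n} max{|A|,|B|}. Let J ⊆ I be an interval of length |J| = c₁' R^{−n} with Δ ∩ J ≠ ∅. Then for every x ∈ J one has |F'_L(x)| ≤ 3 C₀ |J| max{|A|,|B|} and |F_L(x)| ≤ 9 C₀ |J|² max{|A|,|B|}. -/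

import Mathlib

/-- `max{|A|^(1/i), |B|^(1/j)}`. -/
noncomputable def Mnum (i j : ℝ) (A B : ℤ) : ℝ :=
  max (|(A : ℝ)| ^ ((1 : ℝ) / i)) (|(B : ℝ)| ^ ((1 : ℝ) / j))

/-- `F_L(x) = Ax − B f(x) + C`. -/
noncomputable def FL (A B C : ℤ) (f : ℝ → ℝ) (x : ℝ) : ℝ :=
  (A : ℝ) * x - (B : ℝ) * f x + (C : ℝ)

/-!
The derivative `F_L' = A - B f'` is `C₀|B|`-Lipschitz and is at most
`V ≤ R^(-n) max{|A|,|B|}` at `x₀ ∈ Δ`. From `H ≥ 2^k R^(n-1)` and `2K√c 2^(-k) R ≤ c₁'` we get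
`|Δ| ≤ |J|`, so `Δ ∪ J` is an interval of length at most `2|J|`, on which
`|F_L'| ≤ 3C₀|J| max{|A|,|B|}` because `R^(-n) ≤ C₀|J|`. Finally
`|F_L(x₁)| ≤ c / Mnum ≤ C₀|J|² max{|A|,|B|}` since `H² = Mnum·|B|` and `H ≥ R^(n-1)`, and the
mean value theorem on `Δ ∪ J` adds at most `3C₀|J| max{|A|,|B|} · 2|J|`.
-/

open Set

theorem abs_sub_le_of_mem_union_of_mem_inter {a b u v y z w : ℝ}
    (hy : y ∈ Icc a b ∩ Icc u v) (hz : z ∈ Icc a b ∪ Icc u v) (hw : w ∈ Icc a b ∪ Icc u v) :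
    |z - w| ≤ (b - a) + (v - u) := by
  obtain ⟨⟨hay, hyb⟩, huy, hyv⟩ := hy
  rw [abs_sub_le_iff]
  rcases hz with ⟨hz₁, hz₂⟩ | ⟨hz₁, hz₂⟩ <;> rcases hw with ⟨hw₁, hw₂⟩ | ⟨hw₁, hw₂⟩ <;>
    constructor <;> linarith

theorem div_le_mul_rpow_neg {N H R k n : ℝ} (hN : 0 ≤ N) (hR : 0 < R)
    (hH : 2 ^ k * R ^ (n - 1) ≤ H) :
    N / H ≤ N * 2 ^ (-k) * R * R ^ (-n) := by
  calc N / H ≤ N / (2 ^ k * R ^ (n - 1)) := by gcongr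
    _ = N * 2 ^ (-k) * R * R ^ (-n) := by
      rw [Real.rpow_neg zero_le_two, Real.rpow_neg hR.le, Real.rpow_sub_one hR.ne']
      field_simp

theorem le_mul_sq_rpow_neg_mul_sq {c C₀ c₁' H R n : ℝ} (hR : 0 < R) (hC₀ : 0 ≤ C₀)
    (hc : R ^ 2 * c ≤ C₀ * c₁' ^ 2) (hH : R ^ (n - 1) ≤ H) :
    c ≤ C₀ * (c₁' * R ^ (-n)) ^ 2 * H ^ 2 := by
  have hRn : R * R ^ (-n) * R ^ (n - 1) = 1 := by
    rw [Real.rpow_neg hR.le, Real.rpow_sub_one hR.ne']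
    field_simp
  calc c = R ^ 2 * c * (R ^ (-n) * R ^ (n - 1)) ^ 2 := by
        linear_combination (-c * (R * R ^ (-n) * R ^ (n - 1) + 1)) * hRn
    _ ≤ C₀ * c₁' ^ 2 * (R ^ (-n) * H) ^ 2 := by gcongr
    _ = C₀ * (c₁' * R ^ (-n)) ^ 2 * H ^ 2 := by ring

theorem div_Mnum_le {i j c L H : ℝ} {A B : ℤ} (hH : H = √(Mnum i j A B * |(B : ℝ)|))
    (hH₀ : 0 < H) (hL : 0 ≤ L) (hc : c ≤ L * H ^ 2) :
    c / Mnum i j A B ≤ L * max |(A : ℝ)| |(B : ℝ)| := by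
  have hMB : 0 < Mnum i j A B * |(B : ℝ)| := Real.sqrt_pos.mp (hH ▸ hH₀)
  have hM : 0 < Mnum i j A B := pos_of_mul_pos_left hMB (abs_nonneg _)
  rw [hH, Real.sq_sqrt hMB.le] at hc
  rw [div_le_iff₀ hM]
  calc c ≤ L * (Mnum i j A B * |(B : ℝ)|) := hc
    _ ≤ L * (Mnum i j A B * max |(A : ℝ)| |(B : ℝ)|) := by gcongr; exact le_max_right _ _
    _ = L * max |(A : ℝ)| |(B : ℝ)| * Mnum i j A B := by ring

theorem abs_sub_mul_le_of_hasDerivWithinAt {s : Set ℝ} (hs : Convex ℝ s) {f' f'' : ℝ → ℝ}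
    {α β C d : ℝ} (hf'' : ∀ x ∈ s, HasDerivWithinAt f' (f'' x) s x) (hC : ∀ x ∈ s, |f'' x| ≤ C)
    {x y : ℝ} (hx : x ∈ s) (hy : y ∈ s) (hd : |x - y| ≤ d) :
    |α - β * f' x| ≤ |α - β * f' y| + C * |β| * d := by
  have hderiv : ∀ z ∈ s, HasDerivWithinAt (fun z => α - β * f' z) (-(β * f'' z)) s z :=
    fun z hz => by simpa using ((hf'' z hz).const_mul β).const_sub α
  have hbound : ∀ z ∈ s, ‖-(β * f'' z)‖ ≤ C * |β| := fun z hz => by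
    rw [norm_neg, Real.norm_eq_abs, abs_mul, mul_comm]
    exact mul_le_mul_of_nonneg_right (hC z hz) (abs_nonneg β)
  have hmvt := hs.norm_image_sub_le_of_norm_hasDerivWithin_le hderiv hbound hy hx
  simp only [Real.norm_eq_abs] at hmvt
  have hC₀ : 0 ≤ C * |β| := mul_nonneg ((abs_nonneg _).trans (hC x hx)) (abs_nonneg β)
  linarith [abs_sub_abs_le_abs_sub (α - β * f' x) (α - β * f' y), mul_le_mul_of_nonneg_left hd hC₀]

theorem hasDerivWithinAt_FL (A B C : ℤ) {f : ℝ → ℝ} {f'x : ℝ} {s : Set ℝ} {x : ℝ}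
    (hf : HasDerivWithinAt f f'x s x) :
    HasDerivWithinAt (FL A B C f) (A - B * f'x) s x := by
  unfold FL
  simpa using (((hasDerivWithinAt_id x s).const_mul (A : ℝ)).sub (hf.const_mul (B : ℝ))).add_const
    (C : ℝ)

theorem abs_FL_le_of_abs_deriv_le {s : Set ℝ} (hs : Convex ℝ s) {A B C : ℤ} {f f' : ℝ → ℝ}
    {L d : ℝ} (hf' : ∀ x ∈ s, HasDerivWithinAt f (f' x) s x)
    (hL : ∀ x ∈ s, |(A : ℝ) - B * f' x| ≤ L) {x y : ℝ} (hx : x ∈ s) (hy : y ∈ s)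
    (hd : |x - y| ≤ d) :
    |FL A B C f x| ≤ |FL A B C f y| + L * d := by
  have hmvt : |FL A B C f x - FL A B C f y| ≤ L * |x - y| := by
    simpa only [Real.norm_eq_abs] using hs.norm_image_sub_le_of_norm_hasDerivWithin_le
      (fun z hz => hasDerivWithinAt_FL A B C (hf' z hz)) hL hy hx
  have hL₀ : 0 ≤ L := (abs_nonneg _).trans (hL x hx)
  linarith [abs_sub_abs_le_abs_sub (FL A B C f x) (FL A B C f y), mul_le_mul_of_nonneg_left hd hL₀]

theorem lemma_tp2vp_general
    (i j c₀ C₀ c K : ℝ) (R n k : ℕ)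
    (hR : 2 ≤ R)
    (hK : 1 ≤ K)
    (I : Set ℝ) (hI : I.OrdConnected)
    (f f' f'' : ℝ → ℝ)
    (hf' : ∀ x ∈ I, HasDerivWithinAt f (f' x) I x)
    (hf'' : ∀ x ∈ I, HasDerivWithinAt f' (f'' x) I x)
    (hbounds : ∀ x ∈ I, c₀ ≤ |f' x| ∧ |f' x| ≤ C₀ ∧ c₀ ≤ |f'' x| ∧ |f'' x| ≤ C₀)
    (A B C : ℤ)
    (c₁' : ℝ) (hc₁pos : 0 < c₁')
    (hc₁1 : 1 ≤ C₀ * c₁') (hc₁2 : (R : ℝ) ^ 2 * c ≤ C₀ * c₁' ^ 2)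
    (hc₁3 : 2 * K * Real.sqrt c * (2 : ℝ) ^ (-(k : ℝ)) * (R : ℝ) ≤ c₁')
    (a b V H x₀ : ℝ) (hab : a ≤ b) (hΔI : Set.Icc a b ⊆ I)
    (hx₀mem : x₀ ∈ Set.Icc a b) (hx₀ : |(A : ℝ) - (B : ℝ) * f' x₀| = V)
    (hH : H = Real.sqrt (Mnum i j A B * |(B : ℝ)|))
    (hlen : b - a = 2 * K * Real.sqrt c / H)
    (hF₁ : |FL A B C f ((a + b) / 2)| ≤ c / Mnum i j A B)
    (hHlow : (2 : ℝ) ^ (k : ℝ) * (R : ℝ) ^ ((n : ℝ) - 1) ≤ H)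
    (hVsmall : V ≤ (R : ℝ) ^ (-(n : ℝ)) * max |(A : ℝ)| |(B : ℝ)|)
    (u v : ℝ) (hJlen : v - u = c₁' * (R : ℝ) ^ (-(n : ℝ)))
    (hJI : Set.Icc u v ⊆ I)
    (hmeet : (Set.Icc a b ∩ Set.Icc u v).Nonempty) :
    ∀ x ∈ Set.Icc u v,
      |(A : ℝ) - (B : ℝ) * f' x| ≤ 3 * C₀ * (v - u) * max |(A : ℝ)| |(B : ℝ)| ∧
      |FL A B C f x| ≤ 9 * C₀ * (v - u) ^ 2 * max |(A : ℝ)| |(B : ℝ)| := by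
  intro x hx
  set M := max |(A : ℝ)| |(B : ℝ)|
  have hR₀ : (0 : ℝ) < R := by exact_mod_cast (by omega : 0 < R)
  have hC₀ : 0 < C₀ := pos_of_mul_pos_left (one_pos.trans_le hc₁1) hc₁pos.le
  have hH₀ : 0 < H := lt_of_lt_of_le (by positivity) hHlow
  have hJ : 0 < v - u := by rw [hJlen]; positivity
  have hΔJ : b - a ≤ v - u := by
    rw [hlen, hJlen]
    exact (div_le_mul_rpow_neg (by positivity) hR₀ hHlow).trans (by gcongr)
  obtain ⟨y, hy⟩ := hmeet
  have hSconv : Convex ℝ (Icc a b ∪ Icc u v) :=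
    Icc_union_Icc' (hy.2.1.trans hy.1.2) (hy.1.1.trans hy.2.2) ▸ convex_Icc _ _
  have hSI : Icc a b ∪ Icc u v ⊆ I := union_subset hΔI hJI
  have hdist : ∀ z ∈ Icc a b ∪ Icc u v, ∀ w ∈ Icc a b ∪ Icc u v, |z - w| ≤ 2 * (v - u) :=
    fun z hz w hw => (abs_sub_le_of_mem_union_of_mem_inter hy hz hw).trans (by linarith)
  have hRn : (R : ℝ) ^ (-(n : ℝ)) ≤ C₀ * (v - u) := by
    rw [hJlen, ← mul_assoc]
    exact le_mul_of_one_le_left (by positivity) hc₁1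
  have hderiv : ∀ z ∈ Icc a b ∪ Icc u v, |(A : ℝ) - B * f' z| ≤ 3 * C₀ * (v - u) * M := by
    intro z hz
    calc |(A : ℝ) - B * f' z| ≤ |(A : ℝ) - B * f' x₀| + C₀ * |(B : ℝ)| * (2 * (v - u)) :=
          abs_sub_mul_le_of_hasDerivWithinAt hI.convex hf'' (fun w hw => (hbounds w hw).2.2.2)
            (hSI hz) (hΔI hx₀mem) (hdist z hz x₀ (Or.inl hx₀mem))
      _ ≤ C₀ * (v - u) * M + C₀ * M * (2 * (v - u)) := by
          gcongr
          · exact hx₀ ▸ hVsmall.trans (by gcongr)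
          · exact le_max_right _ _
      _ = 3 * C₀ * (v - u) * M := by ring
  refine ⟨hderiv x (Or.inr hx), ?_⟩
  have hx₁ : (a + b) / 2 ∈ Icc a b ∪ Icc u v := Or.inl ⟨by linarith, by linarith⟩
  have hFx₁ : |FL A B C f ((a + b) / 2)| ≤ C₀ * (v - u) ^ 2 * M := by
    refine hF₁.trans (div_Mnum_le hH hH₀ (by positivity) ?_)
    refine hJlen ▸ le_mul_sq_rpow_neg_mul_sq hR₀ hC₀.le hc₁2 ?_
    exact le_mul_of_one_le_left (by positivity) (Real.one_le_rpow one_le_two k.cast_nonneg)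
      |>.trans hHlow
  calc |FL A B C f x| ≤ |FL A B C f ((a + b) / 2)| + 3 * C₀ * (v - u) * M * (2 * (v - u)) :=
        abs_FL_le_of_abs_deriv_le hSconv (fun z hz => (hf' z (hSI hz)).mono hSI) hderiv
          (Or.inr hx) hx₁ (hdist _ (Or.inr hx) _ hx₁)
    _ ≤ C₀ * (v - u) ^ 2 * M + 3 * C₀ * (v - u) * M * (2 * (v - u)) := by gcongr
    _ ≤ 9 * C₀ * (v - u) ^ 2 * M := by
        nlinarith [show 0 ≤ C₀ * (v - u) ^ 2 * M by positivity]

/-- On any interval `J` of length `c₁'R^(−n)` (with `1 ≤ C₀c₁'` and `R²c ≤ C₀c₁'²`)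
meeting a Type 2 interval `Δ`, one has `|F_L'(x)| ≤ 3C₀|J|max{|A|,|B|}` and
`|F_L(x)| ≤ 9C₀|J|²max{|A|,|B|}` for all `x ∈ J`. -/
theorem lemma_tp2vp
    (i j c₀ C₀ c K : ℝ) (R n k : ℕ)
    (hi : 0 < i) (hij : i ≤ j) (hj : j < 1) (hsum : i + j = 1)
    (hc₀ : 0 < c₀) (hC₀ : c₀ ≤ C₀) (hc : 0 < c) (hR : 2 ≤ R)
    (hK : 1 ≤ K) (hn : 1 ≤ n)
    (I : Set ℝ) (hI : I.OrdConnected)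
    (f f' f'' : ℝ → ℝ)
    (hf' : ∀ x ∈ I, HasDerivWithinAt f (f' x) I x)
    (hf'' : ∀ x ∈ I, HasDerivWithinAt f' (f'' x) I x)
    (hbounds : ∀ x ∈ I, c₀ ≤ |f' x| ∧ |f' x| ≤ C₀ ∧ c₀ ≤ |f'' x| ∧ |f'' x| ≤ C₀)
    (A B C : ℤ) (hB : B ≠ 0)
    (c₁' : ℝ) (hc₁pos : 0 < c₁')
    (hc₁1 : 1 ≤ C₀ * c₁') (hc₁2 : (R : ℝ) ^ 2 * c ≤ C₀ * c₁' ^ 2)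
    (hc₁3 : 2 * K * Real.sqrt c * (2 : ℝ) ^ (-(k : ℝ)) * (R : ℝ) ≤ c₁')
    (a b V H x₀ : ℝ) (hab : a ≤ b) (hΔI : Set.Icc a b ⊆ I)
    (hV : IsLeast ((fun x => |(A : ℝ) - (B : ℝ) * f' x|) '' Set.Icc a b) V)
    (hx₀mem : x₀ ∈ Set.Icc a b) (hx₀ : |(A : ℝ) - (B : ℝ) * f' x₀| = V)
    (hH : H = Real.sqrt (Mnum i j A B * |(B : ℝ)|))
    (hlen : b - a = 2 * K * Real.sqrt c / H)
    (hF₁ : |FL A B C f ((a + b) / 2)| ≤ c / Mnum i j A B)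
    (hHlow : (2 : ℝ) ^ (k : ℝ) * (R : ℝ) ^ ((n : ℝ) - 1) ≤ H)
    (hHup : H < (2 : ℝ) ^ ((k : ℝ) + 1) * (R : ℝ) ^ ((n : ℝ) - 1))
    (hVsmall : V ≤ (R : ℝ) ^ (-(n : ℝ)) * max |(A : ℝ)| |(B : ℝ)|)
    (u v : ℝ) (hJlen : v - u = c₁' * (R : ℝ) ^ (-(n : ℝ)))
    (hJI : Set.Icc u v ⊆ I)
    (hmeet : (Set.Icc a b ∩ Set.Icc u v).Nonempty) :
    ∀ x ∈ Set.Icc u v,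
      |(A : ℝ) - (B : ℝ) * f' x| ≤ 3 * C₀ * (v - u) * max |(A : ℝ)| |(B : ℝ)| ∧
      |FL A B C f x| ≤ 9 * C₀ * (v - u) ^ 2 * max |(A : ℝ)| |(B : ℝ)| :=
  lemma_tp2vp_general i j c₀ C₀ c K R n k hR hK I hI f f' f'' hf' hf'' hbounds A B C c₁' hc₁pos hc₁1
    hc₁2 hc₁3 a b V H x₀ hab hΔI hx₀mem hx₀ hH hlen hF₁ hHlow hVsmall u v hJlen hJI hmeet
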